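/- Let a, b, c, d be complex numbers with |a| = |b| = |c| = |d| = 1, a ≠ c, b ≠ d, a + c ≠ 0, b + d ≠ 0, ab ≠ cd and ad ≠ bc. Then the four points c1 := 2ac/(a+c), c2 := 2bd/(b+d), w1 := (ab(c+d) − cd(a+b))/(ab − cd) and w3 := (ad(b+c) − bc(a+d))/(ad − bc) are collinear (collinear over ℝ, viewing ℂ as the real plane). -/

import Mathlib

/-!
The four points lie on the polar, with respect to the unit circle, of the intersection point of
the lines `ac` and `bd`: `c1` and `c2` are the poles of these chords, and `w1`, `w3` are the other
two diagonal points of the complete quadrangle `abcd`, whose diagonal triangle is self-polar.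
Since `conj z = z⁻¹` on the circle, each incidence is a rational identity. The polar is a genuine
line because `a + c ≠ b + d`: a pair of points of the circle is determined by its nonzero sum.
-/

open Complex ComplexConjugate Module

theorem ne_zero_of_norm_eq_one {E : Type*} [NormedAddCommGroup E] {x : E} (hx : ‖x‖ = 1) :
    x ≠ 0 :=
  ne_zero_of_norm_ne_zero (hx ▸ one_ne_zero)

theorem collinear_setOf_mul_add_mul_conj_eq {α β : ℂ} (γ : ℂ) (hαβ : α ≠ 0 ∨ β ≠ 0) :
    Collinear ℝ {z : ℂ | α * z + β * conj z = γ} := by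
  let L : ℂ →ₗ[ℝ] ℂ := α • LinearMap.id + β • conjAe.toLinearMap
  have hL : ∀ z, L z = α * z + β * conj z := fun _ => rfl
  have hL0 : L ≠ 0 := by
    intro h
    have h1 : α + β = 0 := by simpa [hL] using LinearMap.congr_fun h 1
    have hI : (α - β) * I = 0 := by
      have := LinearMap.congr_fun h I
      simp only [hL, conj_I, LinearMap.zero_apply] at this
      linear_combination this
    have h2 : α - β = 0 := (mul_eq_zero.mp hI).resolve_right I_ne_zero
    exact hαβ.elim (· (by linear_combination (h1 + h2) / 2))
      (· (by linear_combination (h1 - h2) / 2))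
  have hspan : vectorSpan ℝ {z : ℂ | α * z + β * conj z = γ} ≤ LinearMap.ker L := by
    rw [vectorSpan_def, Submodule.span_le]
    rintro _ ⟨z, hz, w, hw, rfl⟩
    simp only [Set.mem_ofPred_eq] at hz hw
    simp only [SetLike.mem_coe, LinearMap.mem_ker, vsub_eq_sub, hL, map_sub]
    linear_combination hz - hw
  have hker : finrank ℝ (LinearMap.ker L) ≤ 1 := by
    have hrange : 1 ≤ finrank ℝ (LinearMap.range L) :=
      Submodule.one_le_finrank_iff.mpr (LinearMap.range_eq_bot.not.mpr hL0)
    have := L.finrank_range_add_finrank_ker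
    rw [finrank_real_complex] at this
    omega
  rw [collinear_iff_finrank_le_one]
  exact (Submodule.finrank_mono hspan).trans hker

theorem eq_and_eq_or_eq_and_eq_of_add_eq_add {a b c d : ℂ} (ha : ‖a‖ = 1) (hb : ‖b‖ = 1)
    (hc : ‖c‖ = 1) (hd : ‖d‖ = 1) (hac : a + c ≠ 0) (h : a + c = b + d) :
    (a = b ∧ c = d) ∨ (a = d ∧ c = b) := by
  have hinv : a⁻¹ + c⁻¹ = b⁻¹ + d⁻¹ := by
    simpa only [inv_eq_conj, ha, hb, hc, hd, map_add] using congrArg conj h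
  have hprod : a * c = b * d := by
    field_simp [ne_zero_of_norm_eq_one ha, ne_zero_of_norm_eq_one hb,
      ne_zero_of_norm_eq_one hc, ne_zero_of_norm_eq_one hd] at hinv
    exact mul_left_cancel₀ hac (by linear_combination a * c * h - hinv)
  have hroots : (a - b) * (a - d) = 0 := by linear_combination a * h - hprod
  rcases mul_eq_zero.mp hroots with hab | had
  · exact .inl ⟨sub_eq_zero.mp hab, by linear_combination h - hab⟩
  · exact .inr ⟨sub_eq_zero.mp had, by linear_combination h - had⟩

/-- The polar `{z | Re (z * conj p) = 1}` of the intersection point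
`p = (ac(b+d) - bd(a+c)) / (ac - bd)` of the lines `ac` and `bd`, for `a, b, c, d` on the unit
circle, with denominators cleared so that it still makes sense when these lines are parallel. -/
def polarLine (a b c d : ℂ) : Set ℂ :=
  {z | (a + c - b - d) * z + (a * c * (b + d) - b * d * (a + c)) * conj z = 2 * (a * c - b * d)}

theorem collinear_polarLine {a b c d : ℂ} (h : a + c ≠ b + d) :
    Collinear ℝ (polarLine a b c d) :=
  collinear_setOf_mul_add_mul_conj_eq _ (.inl (by rwa [sub_sub, sub_ne_zero]))

theorem polarLine_swap_chords (a b c d : ℂ) : polarLine b a d c = polarLine a b c d := by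
  ext z
  simp only [polarLine, Set.mem_ofPred_eq]
  constructor <;> intro h <;> linear_combination -h

theorem polarLine_swap_bd (a b c d : ℂ) : polarLine a d c b = polarLine a b c d := by
  ext z
  simp only [polarLine, Set.mem_ofPred_eq]
  ring_nf

theorem center_mem_polarLine {a c : ℂ} (b d : ℂ) (ha : ‖a‖ = 1) (hc : ‖c‖ = 1)
    (hac : a + c ≠ 0) : 2 * a * c / (a + c) ∈ polarLine a b c d := by
  simp only [polarLine, Set.mem_ofPred_eq, map_div₀, map_mul, map_add, map_ofNat,
    ← inv_eq_conj ha, ← inv_eq_conj hc]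
  have hca : c + a ≠ 0 := by rwa [add_comm]
  field_simp [ne_zero_of_norm_eq_one ha, ne_zero_of_norm_eq_one hc]
  ring

theorem lineInter_mem_polarLine {a b c d : ℂ} (ha : ‖a‖ = 1) (hb : ‖b‖ = 1)
    (hc : ‖c‖ = 1) (hd : ‖d‖ = 1) (h : a * b ≠ c * d) :
    (a * b * (c + d) - c * d * (a + b)) / (a * b - c * d) ∈ polarLine a b c d := by
  simp only [polarLine, Set.mem_ofPred_eq, map_div₀, map_mul, map_add, map_sub,
    ← inv_eq_conj ha, ← inv_eq_conj hb, ← inv_eq_conj hc, ← inv_eq_conj hd]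
  have hab : a * b - c * d ≠ 0 := sub_ne_zero.mpr h
  field_simp [ne_zero_of_norm_eq_one ha, ne_zero_of_norm_eq_one hb,
    ne_zero_of_norm_eq_one hc, ne_zero_of_norm_eq_one hd]
  ring

theorem centers_and_intersections_collinear (a b c d : ℂ)
    (ha : ‖a‖ = 1) (hb : ‖b‖ = 1)
    (hc : ‖c‖ = 1) (hd : ‖d‖ = 1)
    (hac' : a + c ≠ 0) (hbd' : b + d ≠ 0)
    (h1 : a * b ≠ c * d) (h3 : a * d ≠ b * c) :
    let c1 := 2 * a * c / (a + c)
    let c2 := 2 * b * d / (b + d)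
    let w1 := (a * b * (c + d) - c * d * (a + b)) / (a * b - c * d)
    let w3 := (a * d * (b + c) - b * c * (a + d)) / (a * d - b * c)
    Collinear ℝ ({c1, c2, w1, w3} : Set ℂ) := by
  intro c1 c2 w1 w3
  have hsum : a + c ≠ b + d := by
    intro h
    rcases eq_and_eq_or_eq_and_eq_of_add_eq_add ha hb hc hd hac' h with ⟨rfl, rfl⟩ | ⟨rfl, rfl⟩
    · exact h3 rfl
    · exact h1 (mul_comm _ _)
  have hw3 : w3 ∈ polarLine a b c d := by
    rw [← polarLine_swap_bd]
    convert lineInter_mem_polarLine ha hd hc hb (by rwa [mul_comm c b]) using 1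
    ring
  refine (collinear_polarLine hsum).subset ?_
  simp only [Set.insert_subset_iff, Set.singleton_subset_iff]
  exact ⟨center_mem_polarLine b d ha hc hac',
    polarLine_swap_chords a b c d ▸ center_mem_polarLine a c hb hd hbd',
    lineInter_mem_polarLine ha hb hc hd h1, hw3⟩
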